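/- Let M be a symmetric D×D matrix with decomposition M = M₊ + M₋ into strictly positive and strictly negative eigenspace parts. Suppose W̄ ∈ ℝ^{D×K} is a local minimum of W ↦ ‖M − WWᵀ‖_F². Then the column span of W̄ is contained in the non-negative eigenspace of M (i.e., P₋W̄ = 0 where P₋ projects onto the strictly negative eigenspace). -/

import Mathlib

open Matrix

/-- Squared Frobenius norm of a real matrix. -/
def frobSq {m n : Type*} [Fintype m] [Fintype n] (M : Matrix m n ℝ) : ℝ :=
  ∑ i, ∑ j, (M i j) ^ 2

/-!
Moving a local minimiser `W` of `‖M - WWᵀ‖²` along `E = (M - WWᵀ)W` decreases the objective at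
rate `4‖E‖²`, so `E = 0`, i.e. `MW = W(WᵀW)`. In the eigenbasis of `M` this reads `ΛU = U(UᵀU)`
with `U = VᵀW`; multiplying by `Uᵀ` on the right gives `ΛG = G²` for the Gram matrix `G = UUᵀ`,
whose `i`-th diagonal entry says `λᵢ ‖Uᵢ‖² = ‖Gᵢ‖² ≥ 0`. Hence every row `Uᵢ` with `λᵢ < 0` vanishes.
-/

section Frobenius

variable {m n : Type*} [Fintype m] [Fintype n]

lemma frobSq_eq_trace (X : Matrix m n ℝ) : frobSq X = trace (X * Xᵀ) := by
  simp [frobSq, trace, mul_apply, sq]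

lemma frobSq_eq_zero_iff {X : Matrix m n ℝ} : frobSq X = 0 ↔ X = 0 := by
  simp [frobSq, Finset.sum_eq_zero_iff_of_nonneg, sq_nonneg, Finset.sum_nonneg, ← Matrix.ext_iff]

lemma hasDerivAt_frobSq_sub_smul_sub_sq_smul (A B C : Matrix m n ℝ) :
    HasDerivAt (fun t : ℝ => frobSq (A - t • B - t ^ 2 • C)) (-2 * trace (A * Bᵀ)) 0 := by
  have hentry (i : m) (j : n) :
      HasDerivAt (fun t : ℝ => (A i j - t * B i j - t ^ 2 * C i j) ^ 2) (2 * A i j * -B i j) 0 := by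
    simpa using ((((hasDerivAt_id (0 : ℝ)).mul_const (B i j)).const_sub (A i j)).fun_sub
      (((hasDerivAt_id (0 : ℝ)).pow 2).mul_const (C i j))).fun_pow 2
  have hsum := HasDerivAt.fun_sum (u := Finset.univ) fun i _ =>
    HasDerivAt.fun_sum (u := Finset.univ) fun j _ => hentry i j
  refine hsum.congr_deriv ?_ |>.congr_of_eventuallyEq (.of_forall fun t => by simp [frobSq])
  simp only [trace, diag, mul_apply, transpose_apply, Finset.mul_sum]
  exact Finset.sum_congr rfl fun i _ => Finset.sum_congr rfl fun j _ => by ring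

end Frobenius

def IsStationaryFactor {m n : Type*} [Fintype m] [Fintype n] (M : Matrix m m ℝ)
    (W : Matrix m n ℝ) : Prop :=
  M * W = W * (Wᵀ * W)

namespace IsStationaryFactor

variable {m n : Type*} [Fintype m] [Fintype n]

lemma of_isLocalMin_frobSq {M : Matrix m m ℝ} (hM : M.IsSymm) {W : Matrix m n ℝ}
    (hmin : IsLocalMin (fun W : Matrix m n ℝ => frobSq (M - W * Wᵀ)) W) :
    IsStationaryFactor M W := by
  obtain ⟨A, hA⟩ : ∃ A, A = M - W * Wᵀ := ⟨_, rfl⟩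
  obtain ⟨E, hE⟩ : ∃ E, E = A * W := ⟨_, rfl⟩
  have hAsymm : Aᵀ = A := by rw [hA, transpose_sub, transpose_mul, transpose_transpose, hM.eq]
  have hcurve (t : ℝ) : M - (W + t • E) * (W + t • E)ᵀ =
      A - t • (E * Wᵀ + W * Eᵀ) - t ^ 2 • (E * Eᵀ) := by
    simp only [hA, transpose_add, transpose_smul, Matrix.add_mul, Matrix.mul_add, Matrix.smul_mul,
      Matrix.mul_smul, smul_add, smul_smul]
    module
  have hline :
      IsLocalMin (fun t : ℝ => frobSq (A - t • (E * Wᵀ + W * Eᵀ) - t ^ 2 • (E * Eᵀ))) 0 := by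
    have := IsLocalMin.comp_continuous (g := fun t : ℝ => W + t • E) (b := 0)
      (by simpa using hmin) (by fun_prop)
    simpa only [Function.comp_def, hcurve] using this
  have hcrit := hline.hasDerivAt_eq_zero (hasDerivAt_frobSq_sub_smul_sub_sq_smul _ _ _)
  have hWA : Wᵀ * A = Eᵀ := by rw [hE, transpose_mul, hAsymm]
  have htrace : trace (A * (E * Wᵀ + W * Eᵀ)ᵀ) = 2 * frobSq E := by
    rw [transpose_add, transpose_mul, transpose_mul, transpose_transpose, transpose_transpose,
      mul_add, trace_add, ← Matrix.mul_assoc, ← hE, trace_mul_comm A, Matrix.mul_assoc, hWA,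
      frobSq_eq_trace]
    ring
  have hE0 : E = 0 := frobSq_eq_zero_iff.mp (by linarith)
  rwa [hE, hA, Matrix.sub_mul, sub_eq_zero, Matrix.mul_assoc] at hE0

lemma of_orthogonal_conj [DecidableEq m] {V Λ : Matrix m m ℝ} (hV : Vᵀ * V = 1)
    {W : Matrix m n ℝ} (h : IsStationaryFactor (V * Λ * Vᵀ) W) :
    IsStationaryFactor Λ (Vᵀ * W) := by
  have hVVt : V * Vᵀ = 1 := mul_eq_one_comm.mp hV
  calc Λ * (Vᵀ * W) = Vᵀ * (V * Λ * Vᵀ * W) := by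
        simp only [← Matrix.mul_assoc, hV, Matrix.one_mul]
    _ = Vᵀ * W * ((Vᵀ * W)ᵀ * (Vᵀ * W)) := by
      rw [h, transpose_mul, transpose_transpose, Matrix.mul_assoc Wᵀ, ← Matrix.mul_assoc V, hVVt,
        Matrix.one_mul, Matrix.mul_assoc]

lemma row_eq_zero_of_neg [DecidableEq m] {d : m → ℝ} {U : Matrix m n ℝ}
    (h : IsStationaryFactor (diagonal d) U) {i : m} (hi : d i < 0) : U i = 0 := by
  obtain ⟨G, hG⟩ : ∃ G, G = U * Uᵀ := ⟨_, rfl⟩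
  have hGsq : diagonal d * G = G * G := by
    rw [hG, ← Matrix.mul_assoc, show diagonal d * U = _ from h]
    simp only [Matrix.mul_assoc]
  have hGsymm : Gᵀ = G := by rw [hG, transpose_mul, transpose_transpose]
  have hGii : G i i = U i ⬝ᵥ U i := by rw [hG, mul_apply']; rfl
  have hdiag : d i * G i i = G i ⬝ᵥ G i := by
    rw [← diagonal_mul, hGsq, mul_apply']
    congr 1
    ext j
    exact congrFun (congrFun hGsymm i) j
  have hGG : 0 ≤ G i ⬝ᵥ G i := Finset.sum_nonneg fun j _ => mul_self_nonneg _
  have hUU : 0 ≤ U i ⬝ᵥ U i := Finset.sum_nonneg fun j _ => mul_self_nonneg _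
  rw [← dotProduct_self_eq_zero]
  nlinarith

lemma diagonal_indicator_neg_mul_eq_zero [DecidableEq m] {d : m → ℝ} {U : Matrix m n ℝ}
    (h : IsStationaryFactor (diagonal d) U) :
    diagonal (fun i => if d i < 0 then (1 : ℝ) else 0) * U = 0 := by
  ext i k
  rw [diagonal_mul]
  split_ifs with hi
  · simp [h.row_eq_zero_of_neg hi]
  · simp

end IsStationaryFactor

theorem stmt_7 {D K : ℕ} (M V : Matrix (Fin D) (Fin D) ℝ) (hM : M.IsSymm)
    (hV : Vᵀ * V = 1) (eig : Fin D → ℝ)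
    (hdecomp : M = V * Matrix.diagonal eig * Vᵀ)
    (Wbar : Matrix (Fin D) (Fin K) ℝ)
    (hmin : IsLocalMin (fun W : Matrix (Fin D) (Fin K) ℝ => frobSq (M - W * Wᵀ)) Wbar) :
    (V * Matrix.diagonal (fun i => if eig i < 0 then (1 : ℝ) else 0) * Vᵀ) * Wbar = 0 := by
  have hstat : IsStationaryFactor (V * diagonal eig * Vᵀ) Wbar :=
    hdecomp ▸ IsStationaryFactor.of_isLocalMin_frobSq hM hmin
  calc (V * diagonal (fun i => if eig i < 0 then (1 : ℝ) else 0) * Vᵀ) * Wbar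
      = V * (diagonal (fun i => if eig i < 0 then (1 : ℝ) else 0) * (Vᵀ * Wbar)) := by
        simp only [Matrix.mul_assoc]
    _ = 0 := by
      rw [(hstat.of_orthogonal_conj hV).diagonal_indicator_neg_mul_eq_zero, Matrix.mul_zero]
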